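/- Let p be an odd prime, set m = (p-1)/2, and let x be a p-adic integer with x = m + p·t for some t ∈ ℤ_p (i.e., ⟨x⟩_p = m). Then for every integer k with 0 ≤ k ≤ m, one has C(x,k)·C(x+k,k) ≡ C(m,k)·C(m+k,k)·(1 - 4·p^2·t·(t+1)·∑_{j=1}^{k} 1/(2j-1)^2) (mod p^3) in ℤ_p. -/

import Mathlib

/-- Generalized binomial coefficient `C(x,k) = x(x-1)⋯(x-k+1)/k!` in `ℚ_[p]`. -/
noncomputable def qchoose {p : ℕ} [Fact p.Prime] (x : ℚ_[p]) (k : ℕ) : ℚ_[p] :=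
  (∏ i ∈ Finset.range k, (x - i)) / (k.factorial : ℚ_[p])

/-!
Since `4 (y - i) (y + i + 1) = (2y + 1)² - (2i + 1)²`, both `C(x,k) C(x+k,k)` and
`C(m,k) C(m+k,k)` are `∏_{i<k} (c v - (2i+1)²) / (4^k k!²)` with `c = p²`, where `v = (2t+1)²`
for `x` (as `2x + 1 = p (2t + 1)`) and `v = 1` for `m` (as `2m + 1 = p`). Expanding to first
order in `c`, `∏ (c v - aᵢ) ≡ ∏ (c - aᵢ) · (1 - c (v - 1) ∑ 1/aᵢ) (mod c²)` whenever the `aᵢ`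
are units, and `v - 1 = 4 t (t + 1)`. As `k < p`, the denominator `4^k k!²` is a `p`-adic unit.
-/

open Finset
open scoped Nat

theorem sq_dvd_prod_mul_sub_sub_prod_sub_mul {R : Type*} [CommRing R] (c v : R) (a : ℕ → R)
    {k : ℕ} (ha : ∀ i ∈ range k, IsUnit (a i)) :
    c ^ 2 ∣ ∏ i ∈ range k, (c * v - a i) -
      (∏ i ∈ range k, (c - a i)) * (1 - c * (v - 1) * ∑ i ∈ range k, Ring.inverse (a i)) := by
  induction k with
  | zero => simp
  | succ k ih =>
    obtain ⟨r, hr⟩ := ih fun i hi => ha i (range_mono k.le_succ hi)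
    have hinv : a k * Ring.inverse (a k) = 1 := Ring.mul_inverse_cancel _ (ha k (by simp))
    set P := ∏ i ∈ range k, (c - a i)
    set S := ∑ i ∈ range k, Ring.inverse (a i)
    refine ⟨r * (c * v - a k) + P * ((v - 1) * Ring.inverse (a k) - (v - 1) ^ 2 * S), ?_⟩
    rw [prod_range_succ, prod_range_succ, sum_range_succ]
    linear_combination (c * v - a k) * hr - P * c * (v - 1) * hinv

theorem prod_range_add_sub {R : Type*} [CommRing R] (y : R) (k : ℕ) :
    ∏ i ∈ range k, (y + k - i) = ∏ i ∈ range k, (y + i + 1) := by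
  induction k with
  | zero => simp
  | succ k ih =>
    rw [prod_range_succ', prod_range_succ, ← ih]
    push_cast
    congr 1
    · exact prod_congr rfl fun i _ => by ring
    · ring

variable {p : ℕ} [Fact p.Prime]

@[simp, norm_cast]
theorem PadicInt.coe_ofNat (n : ℕ) [n.AtLeastTwo] :
    (((no_index (OfNat.ofNat n)) : ℤ_[p]) : ℚ_[p]) = OfNat.ofNat n :=
  PadicInt.coe_natCast n

theorem PadicInt.coe_ringInverse {z : ℤ_[p]} (hz : IsUnit z) :
    ((Ring.inverse z : ℤ_[p]) : ℚ_[p]) = (z : ℚ_[p])⁻¹ :=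
  (eq_inv_of_mul_eq_one_right <| by
    rw [← PadicInt.coe_mul, Ring.mul_inverse_cancel z hz, PadicInt.coe_one])

theorem PadicInt.isUnit_natCast_of_pos_of_lt {n : ℕ} (hn : 0 < n) (hnp : n < p) :
    IsUnit (n : ℤ_[p]) :=
  PadicInt.isUnit_iff.2 <| PadicInt.norm_natCast_eq_one_iff.2 <|
    (Nat.Prime.coprime_iff_not_dvd Fact.out).2 fun h => (Nat.le_of_dvd hn h).not_gt hnp

theorem PadicInt.exists_prod_mul_sub_sub_prod_sub_mul_eq (c v : ℤ_[p]) (a : ℕ → ℤ_[p]) {k : ℕ}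
    (ha : ∀ i ∈ range k, IsUnit (a i)) :
    ∃ r : ℤ_[p], ∏ i ∈ range k, ((c : ℚ_[p]) * v - a i) -
      (∏ i ∈ range k, ((c : ℚ_[p]) - a i)) * (1 - c * (v - 1) * ∑ i ∈ range k, (a i : ℚ_[p])⁻¹)
        = (c : ℚ_[p]) ^ 2 * r := by
  obtain ⟨r, hr⟩ := sq_dvd_prod_mul_sub_sub_prod_sub_mul c v a ha
  refine ⟨r, ?_⟩
  have := congrArg PadicInt.Coe.ringHom hr
  simp only [map_sub, map_mul, map_prod, map_sum, map_pow, map_one] at this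
  rw [sum_congr rfl fun i hi => (PadicInt.coe_ringInverse (ha i hi)).symm]
  exact this

theorem qchoose_mul_qchoose_add (y : ℚ_[p]) (k : ℕ) :
    qchoose y k * qchoose (y + (k : ℚ_[p])) k =
      (∏ i ∈ range k, ((2 * y + 1) ^ 2 - (2 * i + 1) ^ 2)) / (4 ^ k * (k ! : ℚ_[p]) ^ 2) := by
  have hnum : ∏ i ∈ range k, ((2 * y + 1) ^ 2 - (2 * (i : ℚ_[p]) + 1) ^ 2) =
      4 ^ k * ((∏ i ∈ range k, (y - i)) * ∏ i ∈ range k, (y + k - i)) := by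
    rw [prod_range_add_sub, ← prod_mul_distrib, show (4 : ℚ_[p]) ^ k = ∏ _i ∈ range k, 4 by simp,
      ← prod_mul_distrib]
    exact prod_congr rfl fun i _ => by ring
  have hfac : (k ! : ℚ_[p]) ≠ 0 := Nat.cast_ne_zero.2 k.factorial_ne_zero
  rw [hnum, qchoose, qchoose]
  field_simp

theorem natCast_choose_eq_qchoose (n k : ℕ) : (n.choose k : ℚ_[p]) = qchoose (n : ℚ_[p]) k := by
  rw [Nat.cast_choose_eq_descPochhammer_div, descPochhammer_eval_eq_prod_range, qchoose]

theorem norm_four_pow_mul_factorial_sq (hp : p ≠ 2) {k : ℕ} (hk : k < p) :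
    ‖(4 : ℚ_[p]) ^ k * (k ! : ℚ_[p]) ^ 2‖ = 1 := by
  have hprime : p.Prime := Fact.out
  have h4 : p.Coprime 4 := by
    rw [show 4 = 2 ^ 2 by rfl]
    exact ((Nat.coprime_primes hprime Nat.prime_two).2 hp).pow_right 2
  have : p.Coprime (4 ^ k * k ! ^ 2) :=
    (h4.pow_right k).mul_right ((hprime.coprime_factorial_of_lt hk).pow_right 2)
  exact_mod_cast Padic.norm_natCast_eq_one_iff.2 this

/-- Let `p` be an odd prime, `m = (p-1)/2`, and `x = m + p t` a `p`-adic integer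
(`t ∈ ℤ_p`), so that `⟨x⟩_p = m`. Then for `0 ≤ k ≤ m`,
`C(x,k) C(x+k,k) ≡ C(m,k) C(m+k,k) (1 - 4 p^2 t (t+1) ∑_{j=1}^{k} 1/(2j-1)^2) (mod p^3)`. -/
theorem stmt13 (p : ℕ) [Fact p.Prime] (hp : Odd p) (x t : ℤ_[p])
    (hx : x = (((p - 1) / 2 : ℕ) : ℤ_[p]) + p * t) (k : ℕ) (hk : k ≤ (p - 1) / 2) :
    ‖qchoose (x : ℚ_[p]) k * qchoose ((x : ℚ_[p]) + (k : ℚ_[p])) k -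
        (((p - 1) / 2).choose k : ℚ_[p]) * (((p - 1) / 2 + k).choose k : ℚ_[p]) *
          (1 - 4 * (p : ℚ_[p]) ^ 2 * (t : ℚ_[p]) * ((t : ℚ_[p]) + 1) *
            ∑ i ∈ Finset.range k, (1 / (2 * (i : ℚ_[p]) + 1) ^ 2))‖
      ≤ (p : ℝ) ^ (-3 : ℤ) := by
  set m := (p - 1) / 2
  have hmp : 2 * m + 1 = p := by obtain ⟨n, rfl⟩ := hp; omega
  have hm : 2 * (m : ℚ_[p]) + 1 = p := by exact_mod_cast hmp
  have hx' : 2 * (x : ℚ_[p]) + 1 = p * (2 * t + 1) := by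
    rw [hx]; push_cast; linear_combination hm
  have hunit : ∀ i ∈ range k, IsUnit (((2 * i + 1 : ℕ) : ℤ_[p]) ^ 2) := fun i hi =>
    (PadicInt.isUnit_natCast_of_pos_of_lt (by omega) (by simp at hi; omega)).pow 2
  obtain ⟨r, hr⟩ := PadicInt.exists_prod_mul_sub_sub_prod_sub_mul_eq ((p : ℤ_[p]) ^ 2)
    ((2 * t + 1) ^ 2) _ hunit
  push_cast at hr
  have hD := norm_four_pow_mul_factorial_sq (p := p) (by omega) (k := k) (by omega)
  rw [natCast_choose_eq_qchoose, natCast_choose_eq_qchoose, Nat.cast_add, qchoose_mul_qchoose_add,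
    qchoose_mul_qchoose_add, hx', hm, div_mul_eq_mul_div, div_sub_div_same, norm_div, hD, div_one]
  simp only [mul_pow, one_div]
  calc _ = ‖(p : ℚ_[p]) ^ 4 * r‖ := by congr 1; linear_combination hr
    _ ≤ (p : ℝ) ^ (-4 : ℤ) := by
      rw [norm_mul, Padic.norm_p_pow]
      exact mul_le_of_le_one_right (by positivity) (PadicInt.norm_le_one r)
    _ ≤ (p : ℝ) ^ (-3 : ℤ) :=
      zpow_le_zpow_right₀ (by exact_mod_cast (Fact.out : p.Prime).one_le) (by norm_num)
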